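/- arXiv:0911.3628 — 8 statements merged into one kernel-verified Lean document; each statement's English description precedes it below -/
import Mathlib

section
/- Let U be a group, A an abelian group, and {W_a : a ∈ A} a family of subgroups of U each containing the commutator subgroup [U,U]. Suppose that W_a ⊆ W_b · W_{2b-a} for all a, b ∈ A. If A is generated by elements a_1, ..., a_m, then the product of all W_a over a ∈ A equals the product of the W_{ε_1 a_1 + ... + ε_m a_m} over all tuples (ε_1, ..., ε_m) ∈ {0,1}^m. -/
/-!
Let `R` be the join of the `W` over the `0/1`-combinations of the generators and `S` the set of
`x` with `W x ≤ R`. The hypothesis makes `S` closed under the point reflections `z ↦ 2y - z`, and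
a reflection-closed set containing `x` and `x + d` contains the whole progression `x + ℤ d`.
Freeing the coefficients of the generators one at a time, `S` contains every integer combination
of the generators, i.e. all of `A`.
-/

open Pointwise

section Reflection

variable {A : Type*} [AddCommGroup A] {S : Set A} (hS : ∀ y ∈ S, ∀ z ∈ S, y + y - z ∈ S)
include hS

theorem add_zsmul_mem_of_reflection_closed {x d : A} (hx : x ∈ S) (hxd : x + d ∈ S) (n : ℤ) :
    x + n • d ∈ S := by
  suffices ∀ n : ℤ, x + n • d ∈ S ∧ x + (n + 1) • d ∈ S from (this n).1
  intro n
  induction n using Int.induction_on with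
  | zero => simpa using ⟨hx, hxd⟩
  | succ k ih =>
    refine ⟨ih.2, ?_⟩
    convert hS _ ih.2 _ ih.1 using 1
    module
  | pred k ih =>
    refine ⟨?_, by simpa using ih.1⟩
    convert hS _ ih.1 _ ih.2 using 1
    module

variable {ι : Type*} [Fintype ι] (a : ι → A)
  (hbase : ∀ ε : ι → Bool, ∑ i, (if ε i then a i else 0) ∈ S)
include hbase

theorem sum_zsmul_mem_of_reflection_closed [DecidableEq ι] (s : Finset ι) (n : ι → ℤ)
    (hn : ∀ i ∉ s, n i = 0 ∨ n i = 1) : ∑ i, n i • a i ∈ S := by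
  induction s using Finset.induction_on generalizing n with
  | empty =>
    convert hbase fun i => decide (n i = 1) using 2 with i
    rcases hn i (Finset.notMem_empty i) with h | h <;> simp [h]
  | insert j s hj ih =>
    have key (c : ℤ) : ∑ i, Function.update n j c i • a i
        = ∑ i, Function.update n j 0 i • a i + c • a j := by
      simp only [Function.update_apply, ite_smul, Finset.sum_ite, Finset.filter_eq', Finset.mem_univ,
        ↓reduceIte, Finset.sum_singleton, zero_smul, Finset.sum_const_zero, zero_add]
      abel
    have hupdate (c : ℤ) (hc : c = 0 ∨ c = 1) (i : ι) (hi : i ∉ s) :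
        Function.update n j c i = 0 ∨ Function.update n j c i = 1 := by
      rcases eq_or_ne i j with rfl | hij
      · simpa using hc
      · simpa [hij] using hn i (by simp [hij, hi])
    have h0 := ih _ (hupdate 0 (.inl rfl))
    have h1 := ih _ (hupdate 1 (.inr rfl))
    rw [key, one_smul] at h1
    simpa [← key] using add_zsmul_mem_of_reflection_closed hS h0 h1 (n j)

theorem mem_of_reflection_closed (hgen : AddSubgroup.closure (Set.range a) = ⊤) (x : A) :
    x ∈ S := by
  classical
  obtain ⟨n, rfl⟩ := AddSubgroup.mem_closure_range_iff_of_fintype.mp (hgen ▸ AddSubgroup.mem_top x)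
  exact sum_zsmul_mem_of_reflection_closed hS a hbase Finset.univ n (by simp)

end Reflection

theorem stmt0_general {U A : Type*} [Group U] [AddCommGroup A]
    (W : A → Subgroup U)
    (hW : ∀ x y : A, (W x : Set U) ⊆ (W y : Set U) * (W (y + y - x) : Set U))
    (m : ℕ) (a : Fin m → A)
    (hgen : AddSubgroup.closure (Set.range a) = ⊤) :
    (⨆ x : A, W x) = ⨆ ε : Fin m → Bool, W (∑ i, if ε i then a i else 0) := by
  set R := ⨆ ε : Fin m → Bool, W (∑ i, if ε i then a i else 0)
  set S : Set A := {x | W x ≤ R}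
  have hreflect : ∀ y ∈ S, ∀ z ∈ S, y + y - z ∈ S := by
    intro y hy z hz
    have hWy := hW (y + y - z) y
    rw [show y + y - (y + y - z) = z by abel] at hWy
    exact hWy.trans (Subgroup.mul_subset (SetLike.coe_subset_coe.mpr hy)
      (SetLike.coe_subset_coe.mpr hz))
  have hbase (ε : Fin m → Bool) : ∑ i, (if ε i then a i else 0) ∈ S :=
    le_iSup (fun ε : Fin m → Bool => W (∑ i, if ε i then a i else 0)) ε
  exact le_antisymm (iSup_le (mem_of_reflection_closed hreflect a hbase hgen))
    (iSup_le fun ε => le_iSup W _)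

/-- Lemma 4.5 of Hazrat–Wadsworth: if `U` is a group, `A` an abelian group and
`W a` a family of subgroups of `U` each containing the commutator subgroup, with
`W a ⊆ W b · W (2b - a)` for all `a b`, and `A` is generated by `a 0, ..., a (m-1)`,
then the product (= join) of all the `W a` equals the product of the
`W (ε₁ a₁ + ⋯ + εₘ aₘ)` over `ε ∈ {0,1}^m`. -/
theorem stmt0 {U A : Type*} [Group U] [AddCommGroup A]
    (W : A → Subgroup U)
    (hcomm : ∀ x : A, ⁅(⊤ : Subgroup U), (⊤ : Subgroup U)⁆ ≤ W x)
    (hW : ∀ x y : A, (W x : Set U) ⊆ (W y : Set U) * (W (y + y - x) : Set U))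
    (m : ℕ) (a : Fin m → A)
    (hgen : AddSubgroup.closure (Set.range a) = ⊤) :
    (⨆ x : A, W x) = ⨆ ε : Fin m → Bool, W (∑ i, if ε i then a i else 0) :=
  stmt0_general W hW m a hgen
end

section
/- Let D be a division ring and let σ, τ be involutions on D. Then every nonzero τ-symmetric element a ∈ D* can be written a = (a·σ(a))·σ(a⁻¹), where a·σ(a) is σ-symmetric and σ(a⁻¹) is (στσ⁻¹)-symmetric. Hence S_τ* ⊆ S_σ* · S_{στσ⁻¹}* and Σ_τ ⊆ Σ_σ · Σ_{στσ⁻¹}. -/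
/-!
For a unit `a`, `σ(a)` is a unit with inverse `σ(a⁻¹)`, so `a = (a·σ(a))·σ(a)⁻¹`. The first
factor is always `σ`-symmetric, and if `τ(a) = a` then `τ(a⁻¹) = a⁻¹`, which makes
`σ(a⁻¹)` symmetric for `στσ`. For the subgroups, `Σ_σ` is normal in `D*`: a conjugate
`g s g⁻¹` of a `σ`-symmetric `s` equals `(g s σ(g))·(g σ(g))⁻¹`, a quotient of two
`σ`-symmetric units. Hence `Σ_σ · Σ_{στσ}` is a subgroup, and it contains `S_τ*`.
-/

open Pointwise

namespace Subgroup

variable {G : Type*} [Group G]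

theorem closure_normal_of_conj_mem {s : Set G}
    (h : ∀ g : G, ∀ x ∈ s, g * x * g⁻¹ ∈ closure s) : (closure s).Normal := by
  have hconj : Group.conjugatesOfSet s ⊆ closure s := fun y hy => by
    obtain ⟨x, hx, hxy⟩ := Group.mem_conjugatesOfSet_iff.mp hy
    obtain ⟨g, rfl⟩ := isConj_iff.mp hxy
    exact h g x hx
  have : normalClosure s = closure s :=
    le_antisymm (closure_le _ |>.mpr hconj) closure_le_normalClosure
  exact this ▸ normalClosure_normal

theorem closure_subset_closure_mul_closure {s t u : Set G} [(closure t).Normal]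
    (h : s ⊆ t * u) : (closure s : Set G) ⊆ closure t * closure u := by
  have hsub : s ⊆ (closure t ⊔ closure u : Subgroup G) := by
    rw [normal_mul]
    exact h.trans (Set.mul_subset_mul subset_closure subset_closure)
  rw [← normal_mul]
  exact closure_le _ |>.mpr hsub

end Subgroup

section AntiMultiplicative

variable {M : Type*} [Monoid M] {ρ τ : M → M}

def symmetricUnits (ρ : M → M) : Set Mˣ := {u | ρ u = u}

theorem mem_symmetricUnits {u : Mˣ} : u ∈ symmetricUnits ρ ↔ ρ u = u := Iff.rfl

theorem map_one_of_involutive (hmul : ∀ a b : M, ρ (a * b) = ρ b * ρ a)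
    (h2 : ∀ a : M, ρ (ρ a) = a) : ρ 1 = 1 := by
  simpa [h2] using (hmul (ρ 1) 1).symm

theorem map_one_of_mem_symmetricUnits (hmul : ∀ a b : M, ρ (a * b) = ρ b * ρ a)
    {u : Mˣ} (hu : u ∈ symmetricUnits ρ) : ρ 1 = 1 := by
  rw [mem_symmetricUnits] at hu
  have h : ρ 1 * u = u := by simpa [hu] using (hmul (u : M) 1).symm
  exact u.isUnit.mul_eq_right.mp h

theorem inv_mem_symmetricUnits (hmul : ∀ a b : M, ρ (a * b) = ρ b * ρ a)
    {u : Mˣ} (hu : u ∈ symmetricUnits ρ) : u⁻¹ ∈ symmetricUnits ρ := by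
  have h : ρ ↑u⁻¹ * u = 1 := by
    rw [← hu, ← hmul, Units.mul_inv, map_one_of_mem_symmetricUnits hmul hu]
  exact Units.inv_eq_of_mul_eq_one_left h |>.symm

def Units.ofAntiHom (hmul : ∀ a b : M, ρ (a * b) = ρ b * ρ a) (h1 : ρ 1 = 1) (u : Mˣ) : Mˣ where
  val := ρ u
  inv := ρ ↑u⁻¹
  val_inv := by rw [← hmul, Units.inv_mul, h1]
  inv_val := by rw [← hmul, Units.mul_inv, h1]

variable (hmul : ∀ a b : M, ρ (a * b) = ρ b * ρ a) (h2 : ∀ a : M, ρ (ρ a) = a)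
include hmul h2

theorem mul_ofAntiHom_mem_symmetricUnits (u : Mˣ) :
    u * Units.ofAntiHom hmul (map_one_of_involutive hmul h2) u ∈ symmetricUnits ρ := by
  show ρ (u * ρ u) = u * ρ u
  rw [hmul, h2]

theorem closure_symmetricUnits_normal : (Subgroup.closure (symmetricUnits ρ)).Normal := by
  refine Subgroup.closure_normal_of_conj_mem fun g s hs => ?_
  set g' := Units.ofAntiHom hmul (map_one_of_involutive hmul h2) g
  have hgsg' : g * s * g' ∈ symmetricUnits ρ := by
    show ρ (g * s * ρ g) = g * s * ρ g
    rw [hmul, hmul, h2, hs, mul_assoc]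
  have hconj : g * s * g⁻¹ = (g * s * g') * (g * g')⁻¹ := by group
  rw [hconj]
  exact mul_mem (Subgroup.subset_closure hgsg')
    (inv_mem (Subgroup.subset_closure (mul_ofAntiHom_mem_symmetricUnits hmul h2 g)))

theorem symmetricUnits_subset_mul_symmetricUnits (hτmul : ∀ a b : M, τ (a * b) = τ b * τ a) :
    symmetricUnits τ ⊆ symmetricUnits ρ * symmetricUnits (fun x => ρ (τ (ρ x))) := by
  intro u hu
  set u' := Units.ofAntiHom hmul (map_one_of_involutive hmul h2) u
  refine ⟨u * u', mul_ofAntiHom_mem_symmetricUnits hmul h2 u, u'⁻¹, ?_, by group⟩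
  show ρ (τ (ρ (ρ ↑u⁻¹))) = ρ ↑u⁻¹
  rw [h2, inv_mem_symmetricUnits hτmul hu]

end AntiMultiplicative

theorem stmt5_general {D : Type*} [DivisionRing D] (σ τ : D → D)
    (hσmul : ∀ a b : D, σ (a * b) = σ b * σ a)
    (hσ2 : ∀ a : D, σ (σ a) = a)
    (hτmul : ∀ a b : D, τ (a * b) = τ b * τ a) :
    (∀ a : Dˣ, τ (a : D) = (a : D) →
      σ ((a : D) * σ (a : D)) = (a : D) * σ (a : D) ∧
      σ (τ (σ (σ ((a : D)⁻¹)))) = σ ((a : D)⁻¹) ∧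
      (a : D) = ((a : D) * σ (a : D)) * σ ((a : D)⁻¹)) ∧
    {u : Dˣ | τ (u : D) = (u : D)} ⊆
      {u : Dˣ | σ (u : D) = (u : D)} * {u : Dˣ | σ (τ (σ (u : D))) = (u : D)} ∧
    (Subgroup.closure {u : Dˣ | τ (u : D) = (u : D)} : Set Dˣ) ⊆
      (Subgroup.closure {u : Dˣ | σ (u : D) = (u : D)} : Set Dˣ) *
      (Subgroup.closure {u : Dˣ | σ (τ (σ (u : D))) = (u : D)} : Set Dˣ) := by
  have hsplit := symmetricUnits_subset_mul_symmetricUnits hσmul hσ2 hτmul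
  have := closure_symmetricUnits_normal hσmul hσ2
  have hclosure := Subgroup.closure_subset_closure_mul_closure hsplit
  refine ⟨fun a ha => ⟨?_, ?_, ?_⟩, hsplit, hclosure⟩
  · rw [hσmul, hσ2]
  · rw [hσ2, ← Units.val_inv_eq_inv_val, inv_mem_symmetricUnits hτmul ha]
  · rw [mul_assoc, ← hσmul, inv_mul_cancel₀ a.ne_zero, map_one_of_involutive hσmul hσ2, mul_one]

/-- Lemma 4.4(ii) of Hazrat–Wadsworth: if `σ, τ` are involutions on a division
ring `D`, every nonzero `τ`-symmetric `a` factors as `a = (a·σ(a))·σ(a⁻¹)` with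
`a·σ(a)` being `σ`-symmetric and `σ(a⁻¹)` being `στσ⁻¹`-symmetric (here
`σ⁻¹ = σ`); hence `S_τ* ⊆ S_σ* · S_{στσ}*` and `Σ_τ ⊆ Σ_σ · Σ_{στσ}`. -/
theorem stmt5 {D : Type*} [DivisionRing D] (σ τ : D → D)
    (hσadd : ∀ a b : D, σ (a + b) = σ a + σ b)
    (hσmul : ∀ a b : D, σ (a * b) = σ b * σ a)
    (hσ2 : ∀ a : D, σ (σ a) = a)
    (hτadd : ∀ a b : D, τ (a + b) = τ a + τ b)
    (hτmul : ∀ a b : D, τ (a * b) = τ b * τ a)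
    (hτ2 : ∀ a : D, τ (τ a) = a) :
    (∀ a : Dˣ, τ (a : D) = (a : D) →
      σ ((a : D) * σ (a : D)) = (a : D) * σ (a : D) ∧
      σ (τ (σ (σ ((a : D)⁻¹)))) = σ ((a : D)⁻¹) ∧
      (a : D) = ((a : D) * σ (a : D)) * σ ((a : D)⁻¹)) ∧
    {u : Dˣ | τ (u : D) = (u : D)} ⊆
      {u : Dˣ | σ (u : D) = (u : D)} * {u : Dˣ | σ (τ (σ (u : D))) = (u : D)} ∧
    (Subgroup.closure {u : Dˣ | τ (u : D) = (u : D)} : Set Dˣ) ⊆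
      (Subgroup.closure {u : Dˣ | σ (u : D) = (u : D)} : Set Dˣ) *
      (Subgroup.closure {u : Dˣ | σ (τ (σ (u : D))) = (u : D)} : Set Dˣ) :=
  stmt5_general σ τ hσmul hσ2 hτmul
end

section
/- Let E₀ be a cyclic extension of T₀ with Galois group ⟨σ⟩, and let R₀ ⊆ T₀ ⊆ E₀ with [T₀:R₀] = 2 such that E₀/R₀ is Galois and every element of Gal(E₀/R₀) \ Gal(E₀/T₀) has order 2. Let τ ∈ Gal(E₀/R₀) \ Gal(E₀/T₀), and let a ∈ E₀* satisfy N_{E₀/T₀}(a)·τ(N_{E₀/T₀}(a))⁻¹ = 1 (i.e., N_{E₀/T₀}(a) ∈ R₀). Then a is a product of a τ-fixed element and a (στ)-fixed element of E₀*. -/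
open Finset

/-- Powers of a generator up to its order enumerate a finite group bijectively. -/
theorem aux_pow_fin_bijective {G : Type*} [Group G] [Fintype G] (σ : G)
    (hσ : ∀ g : G, g ∈ Subgroup.zpowers σ) :
    Function.Bijective (fun i : Fin (orderOf σ) => σ ^ (i : ℕ)) := by
  rw [Fintype.bijective_iff_injective_and_card]
  constructor
  · intro i j hij
    have h : (i : ℕ) % orderOf σ = (j : ℕ) % orderOf σ := pow_eq_pow_iff_modEq.mp hij
    rw [Nat.mod_eq_of_lt i.2, Nat.mod_eq_of_lt j.2] at h
    exact Fin.ext h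
  · simp [orderOf_eq_card_of_forall_mem_zpowers hσ]

/-- Classical Hilbert 90 for a cyclic extension, derived from the cocycle version. -/
theorem aux_hilbert90 {K L : Type*} [Field K] [Field L] [Algebra K L]
    [FiniteDimensional K L] (σ : L ≃ₐ[K] L) (hσ : ∀ g : L ≃ₐ[K] L, g ∈ Subgroup.zpowers σ)
    (η : L) (hη0 : η ≠ 0) (hη : ∏ g : L ≃ₐ[K] L, g η = 1) :
    ∃ β : L, β ≠ 0 ∧ η * β = σ β := by
  classical
  set n := orderOf σ with hn
  have hbij := aux_pow_fin_bijective σ hσ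
  set c : ℕ → L := fun i => ∏ j ∈ Finset.range i, (σ ^ j) η with hc
  have hc0 : ∀ i, c i ≠ 0 := by
    intro i
    refine Finset.prod_ne_zero_iff.mpr fun j _ => ?_
    exact fun h => hη0 ((σ ^ j).injective (by rw [h, map_zero]))
  have hcadd : ∀ i j, c (i + j) = c i * (σ ^ i) (c j) := by
    intro i j
    simp only [hc, Finset.prod_range_add]
    congr 1
    rw [map_prod]
    refine Finset.prod_congr rfl fun k _ => ?_
    rw [← AlgEquiv.mul_apply, ← pow_add]
  have hcn : c n = 1 := by
    have h1 : c n = ∏ i : Fin n, (σ ^ (i : ℕ)) η := (Fin.prod_univ_eq_prod_range _ n).symm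
    rw [h1, Fintype.prod_bijective _ hbij _ (fun g => g η) (fun i => rfl), hη]
  have hcmul : ∀ q, c (n * q) = 1 := by
    intro q
    induction q with
    | zero => simp [hc]
    | succ q ih => rw [Nat.mul_succ, hcadd, ih, one_mul, hcn, map_one]
  have hmod : ∀ i, c i = c (i % n) := by
    intro i
    conv_lhs => rw [← Nat.div_add_mod i n]
    rw [hcadd, hcmul, one_mul, pow_mul, pow_orderOf_eq_one, one_pow, AlgEquiv.one_apply]
  have hwd : ∀ i j : ℕ, σ ^ i = σ ^ j → c i = c j := by
    intro i j hij
    have h : (i : ℕ) % n = (j : ℕ) % n := pow_eq_pow_iff_modEq.mp hij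
    rw [hmod i, hmod j, h]
  choose idx hidx using hbij.surjective
  have hidx' : ∀ b : L ≃ₐ[K] L, σ ^ ((idx b : ℕ)) = b := fun b => hidx b
  set f : (L ≃ₐ[K] L) → Lˣ := fun g => Units.mk0 (c (idx g)) (hc0 _) with hf
  have hcoc : groupCohomology.IsMulCocycle₁ f := by
    intro g h
    have h1 : σ ^ ((idx (g * h) : ℕ)) = σ ^ ((idx g : ℕ) + (idx h : ℕ)) := by
      rw [pow_add, hidx', hidx', hidx']
    have h2 : ((g • f h * f g : Lˣ) : L) = g (c (idx h)) * c (idx g) := by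
      simp [hf, AlgEquiv.smul_units_def]
    rw [Units.ext_iff, h2]
    show c (idx (g * h)) = _
    rw [hwd _ _ h1, hcadd, hidx']
    ring
  obtain ⟨β, hβ⟩ := groupCohomology.isMulCoboundary₁_of_isMulCocycle₁_of_aut_to_units f hcoc
  have hβσ := hβ σ
  have h1 : c ((idx σ : ℕ)) = η := by
    have h2 : σ ^ ((idx σ : ℕ)) = σ ^ 1 := by rw [hidx', pow_one]
    rw [hwd _ _ h2]
    simp [hc]
  have h3 : σ (β : L) / (β : L) = η := by
    have h4 := congrArg (Units.val) hβσ
    simpa [AlgEquiv.smul_units_def, h1, hf] using h4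
  refine ⟨β, β.ne_zero, ?_⟩
  rw [← h3, div_mul_cancel₀]
  exact β.ne_zero

/-- Key step in Prop. 4.10(v) of Hazrat–Wadsworth: let `R₀ ⊆ T₀ ⊆ E₀` be fields
with `E₀/R₀` finite Galois, `[T₀:R₀] = 2`, `Gal(E₀/T₀) = ⟨σ⟩` cyclic, and let
`τ ∈ Gal(E₀/R₀)` restrict nontrivially to `T₀` with `τ² = id` and
`τστ = σ⁻¹` (dihedral relations, so `E₀` is generalized dihedral for `T₀/R₀`).
If `a ∈ E₀*` has `N_{E₀/T₀}(a) ∈ R₀` (i.e. the norm is `τ`-fixed), then `a` is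
a product of a `τ`-fixed element and a `στ`-fixed element of `E₀*`. -/
theorem stmt7 {R₀ T₀ E₀ : Type*} [Field R₀] [Field T₀] [Field E₀]
    [Algebra R₀ T₀] [Algebra T₀ E₀] [Algebra R₀ E₀] [IsScalarTower R₀ T₀ E₀]
    [FiniteDimensional R₀ E₀] [IsGalois R₀ E₀] [IsGalois T₀ E₀]
    (h2 : Module.finrank R₀ T₀ = 2)
    (σ : E₀ ≃ₐ[T₀] E₀) (hσgen : ∀ g : E₀ ≃ₐ[T₀] E₀, g ∈ Subgroup.zpowers σ)
    (τ : E₀ ≃ₐ[R₀] E₀)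
    (hτT : ∃ t : T₀, τ (algebraMap T₀ E₀ t) ≠ algebraMap T₀ E₀ t)
    (hτ2 : ∀ x : E₀, τ (τ x) = x)
    (hdih : ∀ x : E₀, τ (σ (τ x)) = σ.symm x)
    (a : E₀) (ha : a ≠ 0)
    (hnorm : τ (algebraMap T₀ E₀ (Algebra.norm T₀ a)) =
      algebraMap T₀ E₀ (Algebra.norm T₀ a)) :
    ∃ s t : E₀, τ s = s ∧ σ (τ t) = t ∧ a = s * t := by
  classical
  have : FiniteDimensional T₀ E₀ := FiniteDimensional.right R₀ T₀ E₀
  have hστ : ∀ x : E₀, σ (τ x) = τ (σ.symm x) := by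
    intro x
    have h := congrArg τ (hdih x)
    rwa [hτ2] at h
  have L1 : ∀ (i : ℕ) (x : E₀), (σ ^ i) (τ x) = τ (((σ ^ i)⁻¹) x) := by
    intro i
    induction i with
    | zero => simp
    | succ i ih =>
      intro x
      have h1 : (σ ^ (i + 1)) (τ x) = σ ((σ ^ i) (τ x)) := by rw [pow_succ']; rfl
      rw [h1, ih, hστ]
      congr 1
  have haτ : τ a ≠ 0 := fun h => ha (by simpa using congrArg τ.symm h)
  set n := orderOf σ with hn
  have hbij := aux_pow_fin_bijective σ hσgen
  have hbij' : Function.Bijective (fun i : Fin n => (σ ^ (i : ℕ))⁻¹) :=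
    (inv_involutive.bijective).comp hbij
  have hprodτ : ∏ g : (E₀ ≃ₐ[T₀] E₀), g (τ a) = τ (∏ g : (E₀ ≃ₐ[T₀] E₀), g a) := by
    rw [← Fintype.prod_bijective _ hbij (fun i => (σ ^ (i : ℕ)) (τ a))
      (fun g => g (τ a)) (fun i => rfl)]
    rw [← Fintype.prod_bijective _ hbij' (fun i => ((σ ^ (i : ℕ))⁻¹) a)
      (fun g => g a) (fun i => rfl)]
    rw [map_prod]
    exact Finset.prod_congr rfl fun i _ => L1 _ _
  set η := a * (τ a)⁻¹ with hη
  have hη0 : η ≠ 0 := mul_ne_zero ha (inv_ne_zero haτ)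
  have hprodnorm : ∏ g : (E₀ ≃ₐ[T₀] E₀), g a = algebraMap T₀ E₀ (Algebra.norm T₀ a) :=
    (Algebra.norm_eq_prod_automorphisms T₀ a).symm
  have hprod0 : ∏ g : (E₀ ≃ₐ[T₀] E₀), g a ≠ 0 :=
    Finset.prod_ne_zero_iff.mpr fun g _ => by simpa using ha
  have hηnorm : ∏ g : (E₀ ≃ₐ[T₀] E₀), g η = 1 := by
    have h1 : ∏ g : (E₀ ≃ₐ[T₀] E₀), g η
        = (∏ g : (E₀ ≃ₐ[T₀] E₀), g a) * (∏ g : (E₀ ≃ₐ[T₀] E₀), g (τ a))⁻¹ := by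
      rw [← Finset.prod_inv_distrib, ← Finset.prod_mul_distrib]
      exact Finset.prod_congr rfl fun g _ => by rw [hη, map_mul, map_inv₀]
    rw [h1, hprodτ, hprodnorm, hnorm]
    exact mul_inv_cancel₀ (hprodnorm ▸ hprod0)
  obtain ⟨β, hβ0, hβ⟩ := aux_hilbert90 σ hσgen η hη0 hηnorm
  have hσβ0 : σ β ≠ 0 := by simpa using hβ0
  have hτβ0 : τ β ≠ 0 := fun h => hβ0 (by simpa using congrArg τ.symm h)
  have hrel : a * β = τ a * σ β := by
    have h : a * (τ a)⁻¹ * β = σ β := hβ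
    field_simp at h
    linear_combination h
  have hrel2 : τ a * τ β = a * τ (σ β) := by
    have h := congrArg τ hrel
    rwa [map_mul, map_mul, hτ2] at h
  have hR : β * τ β = σ β * τ (σ β) := by
    have haa : a * τ a ≠ 0 := mul_ne_zero ha haτ
    refine mul_left_cancel₀ haa ?_
    calc (a * τ a) * (β * τ β) = (a * β) * (τ a * τ β) := by ring
    _ = (τ a * σ β) * (a * τ (σ β)) := by rw [hrel, hrel2]
    _ = (a * τ a) * (σ β * τ (σ β)) := by ring
  set d := τ (σ β) * β⁻¹ with hd
  have hτσβ0 : τ (σ β) ≠ 0 := fun h => hσβ0 (by simpa using congrArg τ.symm h)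
  have hd0 : d ≠ 0 := mul_ne_zero hτσβ0 (inv_ne_zero hβ0)
  have hτd : τ d = σ β * (τ β)⁻¹ := by rw [hd, map_mul, map_inv₀, hτ2]
  have hdτd : d * τ d = 1 := by
    rw [hd, hτd]
    field_simp
    linear_combination -hR
  have hσd : σ d = d := by
    rw [hd, map_mul, map_inv₀, hστ (σ β), AlgEquiv.symm_apply_apply]
    field_simp
    linear_combination hR
  obtain ⟨l, hl0, hσl, hdl⟩ : ∃ l : E₀, l ≠ 0 ∧ σ l = l ∧ d * τ l = l := by
    by_cases h1d : (1 : E₀) + d = 0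
    · obtain ⟨t0, ht0⟩ := hτT
      refine ⟨algebraMap T₀ E₀ t0 - τ (algebraMap T₀ E₀ t0),
        sub_ne_zero.mpr (Ne.symm ht0), ?_, ?_⟩
      · rw [map_sub, AlgEquiv.commutes, hστ, AlgEquiv.commutes]
      · have hd1 : d = -1 := by linear_combination h1d
        rw [hd1, map_sub, hτ2]
        ring
    · refine ⟨1 + d, h1d, ?_, ?_⟩
      · rw [map_add, map_one, hσd]
      · rw [map_add, map_one, mul_add, mul_one, hdτd]
        ring
  set c' := β * l with hc'
  have hc'0 : c' ≠ 0 := mul_ne_zero hβ0 hl0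
  have hσc'0 : σ c' ≠ 0 := by simpa using hc'0
  have hτσc' : τ (σ c') = c' := by
    rw [hc', map_mul, hσl, map_mul]
    have h : τ (σ β) = d * β := by rw [hd]; field_simp
    rw [h]
    calc d * β * τ l = β * (d * τ l) := by ring
    _ = β * l := by rw [hdl]
  have hrel' : a * c' = τ a * σ c' := by
    rw [hc', map_mul, hσl]
    calc a * (β * l) = (a * β) * l := by ring
    _ = (τ a * σ β) * l := by rw [hrel]
    _ = τ a * (σ β * l) := by ring
  refine ⟨a * (σ c')⁻¹, σ c', ?_, ?_, ?_⟩
  · rw [map_mul, map_inv₀, hτσc']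
    field_simp
    linear_combination -hrel'
  · rw [hτσc']
  · field_simp
end

section
/- Let T be a field, n a positive integer, and e a divisor of n such that all e-th roots of unity lie in T (μ_e ⊆ T*). Let τ be an automorphism of T of order 2 with fixed field R, such that τ(ω) = ω⁻¹ for all ω ∈ μ_e. Then {a ∈ T* : a^e ∈ R*} is a subgroup containing R* and μ_e, and the quotient {a ∈ T* : a^n ∈ R*} / {a ∈ T* : a^e ∈ R*} is isomorphic to {ω ∈ μ_n(T) : τ(ω) = ω⁻¹} / μ_e, via the map sending a to a·τ(a)⁻¹ composed with Hilbert 90 in the reverse direction. -/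
/-- The subgroup `{a ∈ T* : a^k ∈ R*}` of units whose `k`-th power is fixed by
the automorphism `τ` (here `R = T^τ` is the fixed field). -/
def powFixed (T : Type*) [Field T] (τ : T ≃+* T) (k : ℕ) : Subgroup Tˣ where
  carrier := {a : Tˣ | τ ((a : T) ^ k) = (a : T) ^ k}
  one_mem' := by simp
  mul_mem' := by
    intro a b ha hb
    simp only [Set.mem_setOf_eq, Units.val_mul, mul_pow, map_mul] at *
    rw [ha, hb]
  inv_mem' := by
    intro a ha
    simp only [Set.mem_setOf_eq] at *
    rw [Units.val_inv_eq_inv_val, inv_pow, map_inv₀, ha]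

/-- The subgroup `{ω ∈ μ_n(T) : τ(ω) = ω⁻¹}` of `n`-th roots of unity inverted
by `τ`. -/
def rootsInvSub (T : Type*) [Field T] (τ : T ≃+* T) (n : ℕ) : Subgroup Tˣ where
  carrier := {ω : Tˣ | (ω : T) ^ n = 1 ∧ τ (ω : T) = (ω : T)⁻¹}
  one_mem' := by simp
  mul_mem' := by
    intro a b ha hb
    obtain ⟨ha1, ha2⟩ := ha; obtain ⟨hb1, hb2⟩ := hb
    refine ⟨?_, ?_⟩
    · simp only [Units.val_mul, mul_pow, ha1, hb1, one_mul]
    · simp only [Units.val_mul, map_mul, ha2, hb2, mul_inv]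
  inv_mem' := by
    intro a ha
    obtain ⟨ha1, ha2⟩ := ha
    refine ⟨?_, ?_⟩
    · rw [Units.val_inv_eq_inv_val, inv_pow, ha1, inv_one]
    · rw [Units.val_inv_eq_inv_val, map_inv₀, ha2, inv_inv]

/-- The subgroup `μ_e(T)` of `e`-th roots of unity in `T*`. -/
def muSub (T : Type*) [Field T] (e : ℕ) : Subgroup Tˣ where
  carrier := {ω : Tˣ | (ω : T) ^ e = 1}
  one_mem' := by simp
  mul_mem' := by
    intro a b ha hb
    simp only [Set.mem_setOf_eq, Units.val_mul, mul_pow] at *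
    rw [ha, hb, one_mul]
  inv_mem' := by
    intro a ha
    simp only [Set.mem_setOf_eq] at *
    rw [Units.val_inv_eq_inv_val, inv_pow, ha, inv_one]

/-! Hilbert 90 for the quadratic extension `T / T^τ` makes `a ↦ a / τ(a)` map
`{a : a^n ∈ R*}` onto `{ω ∈ μ_n : τ(ω) = ω⁻¹}`. Since `τ(a^k) = a^k` exactly when
`(a / τ(a))^k = 1`, the preimage of `μ_e` is `{a : a^e ∈ R*}`, and the first
isomorphism theorem gives the isomorphism of quotients. -/

namespace QuadraticHilbert90

variable {T : Type*} [Field T] {τ : T ≃+* T}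

theorem apply_pow_eq_pow_iff {a : T} (ha : a ≠ 0) (k : ℕ) :
    τ (a ^ k) = a ^ k ↔ (a * (τ a)⁻¹) ^ k = 1 := by
  rw [mul_pow, inv_pow, ← map_pow, mul_inv_eq_one₀ (by simpa using pow_ne_zero k ha), eq_comm]

theorem apply_mul_inv_apply (hτ2 : ∀ x, τ (τ x) = x) (a : T) :
    τ (a * (τ a)⁻¹) = (a * (τ a)⁻¹)⁻¹ := by
  rw [map_mul, map_inv₀, hτ2, mul_inv, inv_inv, mul_comm]

theorem exists_add_mul_apply_ne_zero (hτ : τ ≠ RingEquiv.refl T) (b : T) :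
    ∃ c : T, c + b * τ c ≠ 0 := by
  by_contra! h
  have hb : b = -1 := by linear_combination h 1 - (by simp : τ 1 = 1) * b
  refine hτ (RingEquiv.ext fun x => ?_)
  rw [RingEquiv.refl_apply]
  linear_combination -(h x) + τ x * hb

/-- Hilbert 90 for an involution: the solution is `a = c + b τ(c)` for any `c` making it nonzero. -/
theorem exists_mul_inv_apply_eq (hτ2 : ∀ x, τ (τ x) = x) (hτ : τ ≠ RingEquiv.refl T)
    {b : T} (hb : b * τ b = 1) : ∃ a : T, a ≠ 0 ∧ a * (τ a)⁻¹ = b := by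
  obtain ⟨c, hc⟩ := exists_add_mul_apply_ne_zero hτ b
  have hτa : b * τ (c + b * τ c) = c + b * τ c := by
    rw [map_add, map_mul, hτ2]
    linear_combination c * hb
  refine ⟨c + b * τ c, hc, ?_⟩
  have hτa0 : τ (c + b * τ c) ≠ 0 := fun h0 => hc (by rw [← hτa, h0, mul_zero])
  rw [mul_inv_eq_iff_eq_mul₀ hτa0, hτa]

def divApply (τ : T ≃+* T) : Tˣ →* Tˣ := MonoidHom.id Tˣ / Units.map (τ : T →* T)

@[simp]
theorem val_divApply (a : Tˣ) : (divApply τ a : T) = a * (τ a)⁻¹ := by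
  simp [divApply, div_eq_mul_inv]

theorem divApply_mem_rootsInvSub (hτ2 : ∀ x, τ (τ x) = x) {n : ℕ} {a : Tˣ}
    (ha : a ∈ powFixed T τ n) : divApply τ a ∈ rootsInvSub T τ n :=
  ⟨by rw [val_divApply, ← apply_pow_eq_pow_iff a.ne_zero]; exact ha,
    by rw [val_divApply, apply_mul_inv_apply hτ2]⟩

def powFixedToRootsInv (hτ2 : ∀ x, τ (τ x) = x) (n : ℕ) :
    powFixed T τ n →* rootsInvSub T τ n :=
  ((divApply τ).comp (powFixed T τ n).subtype).codRestrict _ fun a =>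
    divApply_mem_rootsInvSub hτ2 a.2

@[simp]
theorem val_powFixedToRootsInv (hτ2 : ∀ x, τ (τ x) = x) {n : ℕ} (a : powFixed T τ n) :
    ((powFixedToRootsInv hτ2 n a : Tˣ) : T) = ((a : Tˣ) : T) * (τ ((a : Tˣ) : T))⁻¹ :=
  val_divApply _

theorem powFixedToRootsInv_surjective (hτ2 : ∀ x, τ (τ x) = x)
    (hτ : τ ≠ RingEquiv.refl T) (n : ℕ) : Function.Surjective (powFixedToRootsInv hτ2 n) := by
  rintro ⟨b, hbn, hbτ⟩
  obtain ⟨a, ha0, hab⟩ :=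
    exists_mul_inv_apply_eq hτ2 hτ (b := b) (by rw [hbτ, mul_inv_cancel₀ b.ne_zero])
  have ha : Units.mk0 a ha0 ∈ powFixed T τ n :=
    (apply_pow_eq_pow_iff ha0 n).2 (by rw [hab, hbn])
  exact ⟨⟨_, ha⟩, Subtype.ext (Units.ext (by rw [val_powFixedToRootsInv]; exact hab))⟩

theorem comap_powFixedToRootsInv (hτ2 : ∀ x, τ (τ x) = x) (n e : ℕ) :
    ((muSub T e).subgroupOf (rootsInvSub T τ n)).comap (powFixedToRootsInv hτ2 n) =
      (powFixed T τ e).subgroupOf (powFixed T τ n) := by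
  ext a
  change ((powFixedToRootsInv hτ2 n a : Tˣ) : T) ^ e = 1 ↔ τ (((a : Tˣ) : T) ^ e) = _
  rw [val_powFixedToRootsInv]
  exact (apply_pow_eq_pow_iff (a : Tˣ).ne_zero e).symm

end QuadraticHilbert90

open QuadraticHilbert90 in
theorem stmt8_general (T : Type*) [Field T] (τ : T ≃+* T)
    (hτ2 : ∀ x : T, τ (τ x) = x) (hτne : τ ≠ RingEquiv.refl T)
    (n e : ℕ) :
    (∀ a : Tˣ, τ (a : T) = (a : T) → a ∈ powFixed T τ e) ∧
    (∀ ω : Tˣ, (ω : T) ^ e = 1 → ω ∈ powFixed T τ e) ∧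
    ∃ φ : (powFixed T τ n) ⧸ ((powFixed T τ e).subgroupOf (powFixed T τ n)) ≃*
        (rootsInvSub T τ n) ⧸ ((muSub T e).subgroupOf (rootsInvSub T τ n)),
      ∀ (a : Tˣ) (ha : a ∈ powFixed T τ n) (b : Tˣ) (hb : b ∈ rootsInvSub T τ n),
        (b : T) = (a : T) * (τ (a : T))⁻¹ →
          φ (QuotientGroup.mk ⟨a, ha⟩) = QuotientGroup.mk ⟨b, hb⟩ := by
  refine ⟨fun a ha => show τ (_ ^ e) = _ by rw [map_pow, ha],
    fun ω hω => show τ (_ ^ e) = _ by rw [hω, map_one], ?_⟩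
  have hker : (powFixed T τ e).subgroupOf (powFixed T τ n) =
      ((QuotientGroup.mk' ((muSub T e).subgroupOf (rootsInvSub T τ n))).comp
        (powFixedToRootsInv hτ2 n)).ker := by
    rw [← MonoidHom.comap_ker, QuotientGroup.ker_mk', comap_powFixedToRootsInv]
  refine ⟨QuotientGroup.liftEquiv _
    ((QuotientGroup.mk'_surjective _).comp (powFixedToRootsInv_surjective hτ2 hτne n)) hker,
    fun a ha b hb hab => ?_⟩
  rw [QuotientGroup.liftEquiv_mk, MonoidHom.comp_apply, QuotientGroup.mk'_apply]
  exact congrArg _ (Subtype.ext (Units.ext (by rw [val_powFixedToRootsInv, hab])))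

/-- Part of Theorem 5.1 of Hazrat–Wadsworth: for a field `T` with an order-2
automorphism `τ` with fixed field `R`, `e ∣ n`, `μ_e ⊆ T*`, and `τ` inverting
`μ_e`, the set `{a ∈ T* : a^e ∈ R*}` is a subgroup containing `R*` and `μ_e`,
and `{a : a^n ∈ R*}/{a : a^e ∈ R*} ≅ {ω ∈ μ_n(T) : τ(ω) = ω⁻¹}/μ_e` via
`a ↦ a·τ(a)⁻¹`. -/
theorem stmt8 (T : Type*) [Field T] (τ : T ≃+* T)
    (hτ2 : ∀ x : T, τ (τ x) = x) (hτne : τ ≠ RingEquiv.refl T)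
    (n e : ℕ) (hn : 0 < n) (he : 0 < e) (hdvd : e ∣ n)
    (hprim : ∃ ζ : T, IsPrimitiveRoot ζ e)
    (hinv : ∀ ω : T, ω ^ e = 1 → τ ω = ω⁻¹) :
    (∀ a : Tˣ, τ (a : T) = (a : T) → a ∈ powFixed T τ e) ∧
    (∀ ω : Tˣ, (ω : T) ^ e = 1 → ω ∈ powFixed T τ e) ∧
    ∃ φ : (powFixed T τ n) ⧸ ((powFixed T τ e).subgroupOf (powFixed T τ n)) ≃*
        (rootsInvSub T τ n) ⧸ ((muSub T e).subgroupOf (rootsInvSub T τ n)),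
      ∀ (a : Tˣ) (ha : a ∈ powFixed T τ n) (b : Tˣ) (hb : b ∈ rootsInvSub T τ n),
        (b : T) = (a : T) * (τ (a : T))⁻¹ →
          φ (QuotientGroup.mk ⟨a, ha⟩) = QuotientGroup.mk ⟨b, hb⟩ :=
  stmt8_general T τ hτ2 hτne n e
end

section
/- Let G be a group with a normal subgroup N such that G/(Z(G)·N) is cyclic, generated by the coset of x ∈ G. Then [N, G] = [N, N] · {[x, n] : n ∈ N}, i.e., the commutator subgroup [N,G] is generated by [N,N] together with the commutators [x,n] for n ∈ N. -/
open Pointwise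
open scoped commutatorElement

/-!
Modulo `⁅N, N⁆`, the map `n ↦ ⁅x, n⁆` is a homomorphism on `N`, because
`⁅x, n₁ n₂⁆ = ⁅x, n₁⁆ ⁅n₁, ⁅x, n₂⁆⁆ ⁅x, n₂⁆`; hence `K = ⁅N, N⁆ · {⁅x, n⁆}` is a subgroup of `G`.
Since `N` is normal, the elements `g` with `⁅g, N⁆ ⊆ K` also form a subgroup. It contains `x`,
`Z(G)` and `N`, so it is all of `G`, i.e. `⁅N, G⁆ ≤ K`; the reverse inclusion is clear.
-/

namespace Subgroup

variable {G : Type*} [Group G]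

def centralizerMod (N K : Subgroup G) [N.Normal] : Subgroup G where
  carrier := {g | ∀ n ∈ N, ⁅g, n⁆ ∈ K}
  one_mem' n _ := by simp [K.one_mem]
  mul_mem' {g₁ g₂} h₁ h₂ n hn := by
    have hconj : ⁅g₁ * g₂, n⁆ = ⁅g₁, g₂ * n * g₂⁻¹⁆ * ⁅g₂, n⁆ := by
      simp only [commutatorElement_def]; group
    rw [hconj]
    exact K.mul_mem (h₁ _ (Normal.conj_mem ‹_› n hn g₂)) (h₂ n hn)
  inv_mem' {g} h n hn := by
    have hconj : ⁅g⁻¹, n⁆ = ⁅g, g⁻¹ * n * g⁆⁻¹ := by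
      simp only [commutatorElement_def]; group
    rw [hconj]
    exact K.inv_mem (h _ (Normal.conj_mem' ‹_› n hn g))

theorem commutator_le_iff_le_centralizerMod {N H K : Subgroup G} [N.Normal] :
    ⁅N, H⁆ ≤ K ↔ H ≤ centralizerMod N K := by
  rw [commutator_le]
  refine ⟨fun h g hg n hn => ?_, fun h n hn g hg => ?_⟩
  · rw [← commutatorElement_inv]
    exact K.inv_mem (h n hn g hg)
  · rw [← commutatorElement_inv]
    exact K.inv_mem (h hg n hn)

def commutatorModHom (N : Subgroup G) [N.Normal] (x : G) : N →* G ⧸ ⁅N, N⁆ where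
  toFun n := (⁅x, (n : G)⁆ : G)
  map_one' := by simp
  map_mul' n₁ n₂ := by
    have hsplit :
        ⁅x, (n₁ * n₂ : G)⁆ = ⁅x, (n₁ : G)⁆ * ⁅(n₁ : G), ⁅x, (n₂ : G)⁆⁆ * ⁅x, (n₂ : G)⁆ := by
      simp only [commutatorElement_def]; group
    have hmid : ⁅(n₁ : G), ⁅x, (n₂ : G)⁆⁆ ∈ ⁅N, N⁆ :=
      commutator_mem_commutator n₁.2
        (commutator_le_right ⊤ N (commutator_mem_commutator (mem_top x) n₂.2))
    simp only [coe_mul, hsplit, QuotientGroup.mk_mul, (QuotientGroup.eq_one_iff _).mpr hmid, mul_one]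

def commutatorMulCommutatorWith (N : Subgroup G) [N.Normal] (x : G) : Subgroup G :=
  (N.commutatorModHom x).range.comap (QuotientGroup.mk' ⁅N, N⁆)

theorem coe_commutatorMulCommutatorWith (N : Subgroup G) [N.Normal] (x : G) :
    (N.commutatorMulCommutatorWith x : Set G) =
      ⁅N, N⁆ * {y : G | ∃ n ∈ N, y = ⁅x, n⁆} := by
  ext y
  simp only [commutatorMulCommutatorWith, coe_comap, Set.mem_preimage, SetLike.mem_coe,
    MonoidHom.mem_range, Set.mem_mul, Set.mem_ofPred_eq]
  constructor
  · rintro ⟨⟨n, hn⟩, hny⟩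
    refine ⟨y * ⁅x, n⁆⁻¹, ?_, _, ⟨n, hn, rfl⟩, inv_mul_cancel_right y _⟩
    rw [← div_eq_mul_inv, ← QuotientGroup.eq_iff_div_mem]
    exact hny.symm
  · rintro ⟨h, hh, _, ⟨n, hn, rfl⟩, rfl⟩
    refine ⟨⟨n, hn⟩, ?_⟩
    simp [commutatorModHom, (QuotientGroup.eq_one_iff h).mpr hh]

theorem commutator_le_commutatorMulCommutatorWith (N : Subgroup G) [N.Normal] (x : G) :
    ⁅N, N⁆ ≤ N.commutatorMulCommutatorWith x := fun h hh => by
  rw [← SetLike.mem_coe, coe_commutatorMulCommutatorWith]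
  exact ⟨h, hh, 1, ⟨1, N.one_mem, by simp⟩, mul_one h⟩

theorem commutatorElement_mem_commutatorMulCommutatorWith (N : Subgroup G) [N.Normal] (x : G)
    {n : G} (hn : n ∈ N) : ⁅x, n⁆ ∈ N.commutatorMulCommutatorWith x := by
  rw [← SetLike.mem_coe, coe_commutatorMulCommutatorWith]
  exact ⟨1, one_mem _, _, ⟨n, hn, rfl⟩, one_mul _⟩

theorem commutatorMulCommutatorWith_le (N : Subgroup G) [N.Normal] (x : G) :
    N.commutatorMulCommutatorWith x ≤ ⁅N, ⊤⁆ := by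
  intro y hy
  rw [← SetLike.mem_coe, coe_commutatorMulCommutatorWith] at hy
  obtain ⟨h, hh, _, ⟨n, hn, rfl⟩, rfl⟩ := hy
  refine mul_mem (commutator_mono le_rfl le_top hh) ?_
  rw [← commutatorElement_inv]
  exact inv_mem (commutator_mem_commutator hn (mem_top x))

theorem eq_top_of_forall_eq_zpow_mul_mul {N : Subgroup G} {x : G}
    (hgen : ∀ g : G, ∃ (k : ℤ) (z n : G), z ∈ center G ∧ n ∈ N ∧ g = x ^ k * z * n)
    {S : Subgroup G} (hx : x ∈ S) (hZ : center G ≤ S) (hN : N ≤ S) : S = ⊤ := by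
  refine eq_top_iff.mpr fun g _ => ?_
  obtain ⟨k, z, n, hz, hn, rfl⟩ := hgen g
  exact mul_mem (mul_mem (zpow_mem hx k) (hZ hz)) (hN hn)

end Subgroup

open Subgroup in
/-- The group-theoretic observation in Prop. 4.10(i) of Hazrat–Wadsworth: if
`N ⊴ G` and `G/(Z(G)·N)` is cyclic generated by the coset of `x`, then
`[N,G] = [N,N]·[x,N]`. -/
theorem stmt10 {G : Type*} [Group G] (N : Subgroup G) [N.Normal] (x : G)
    (hcyc : ∀ g : G, ∃ (k : ℤ) (z n : G),
      z ∈ Subgroup.center G ∧ n ∈ N ∧ g = x ^ k * z * n) :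
    ((⁅N, (⊤ : Subgroup G)⁆ : Subgroup G) : Set G) =
      ((⁅N, N⁆ : Subgroup G) : Set G) * {y : G | ∃ n ∈ N, y = ⁅x, n⁆} := by
  suffices ⁅N, ⊤⁆ = N.commutatorMulCommutatorWith x by
    rw [this, coe_commutatorMulCommutatorWith]
  refine le_antisymm ?_ (commutatorMulCommutatorWith_le N x)
  rw [commutator_le_iff_le_centralizerMod, top_le_iff]
  refine eq_top_of_forall_eq_zpow_mul_mul hcyc
    (fun n hn => commutatorElement_mem_commutatorMulCommutatorWith N x hn)
    (fun z hz n _ => ?_) (fun m hm n hn => ?_)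
  · rw [commutatorElement_eq_one_iff_mul_comm.mpr (mem_center_iff.mp hz n).symm]
    exact one_mem _
  · exact commutator_le_commutatorMulCommutatorWith N x (commutator_mem_commutator hm hn)
end

section
/- Let E be a graded division algebra over a graded field with torsion-free grade group, Q = q(E) its quotient division ring obtained by central localization, and λ : Q* → E* the extension of the leading-term map (λ(ac⁻¹) = λ(a)λ(c)⁻¹ for a ∈ E\{0}, c ∈ Z(E)\{0}). If τ is a graded involution on E, extended to Q, then τ(λ(q)) = λ(τ(q)) for all q ∈ Q*; consequently λ(Σ_τ(Q)) ⊆ Σ_τ(E) and Σ_τ(Q) ∩ E* ⊆ Σ_τ(E). -/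
/-!
A graded involution preserves every homogeneous component, so on `E` it carries the lowest
component of `a` to the lowest component of `τ a`. Every element of `Q*` is a fraction
`f a * (f c)⁻¹` and `λ` is multiplicative, so `τ ∘ λ = λ ∘ τ` passes from `E` to `Q*`; hence
`λ` maps τ-symmetric units to τ-symmetric units and `Σ_τ(Q)` into `Σ_τ(E)`. For the last claim,
units of `E` are homogeneous (the lowest and the highest components of `a` and `a⁻¹` multiply to
nonzero components of `1`, which lives in degree `0`), so `λ` fixes them.
-/

namespace DirectSum

variable {ι R σ : Type*} [AddCommMonoid ι] [DecidableEq ι] [Semiring R] [SetLike σ R]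
  [AddSubmonoidClass σ R] {𝒜 : ι → σ} [SetLike.GradedMonoid 𝒜]

theorem coe_mul_apply_add_of_unique [∀ (i : ι) (x : 𝒜 i), Decidable (x ≠ 0)]
    (r r' : ⨁ i, 𝒜 i) {i j : ι} (hi : i ∈ r.support) (hj : j ∈ r'.support)
    (huniq : ∀ k ∈ r.support, ∀ l ∈ r'.support, k + l = i + j → k = i ∧ l = j) :
    ((r * r') (i + j) : R) = r i * r' j := by
  rw [coe_mul_apply, Finset.sum_eq_single_of_mem (i, j) (by simp [hi, hj])]
  rintro ⟨k, l⟩ hkl hne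
  simp only [Finset.mem_filter, Finset.mem_product] at hkl
  obtain ⟨rfl, rfl⟩ := huniq k hkl.1.1 l hkl.1.2 hkl.2
  exact absurd rfl hne

theorem coe_mul_apply_min'_add_min' [LinearOrder ι] [IsOrderedCancelAddMonoid ι]
    [∀ (i : ι) (x : 𝒜 i), Decidable (x ≠ 0)] {r r' : ⨁ i, 𝒜 i} (hr : r.support.Nonempty)
    (hr' : r'.support.Nonempty) :
    ((r * r') (r.support.min' hr + r'.support.min' hr') : R) =
      r (r.support.min' hr) * r' (r'.support.min' hr') :=
  coe_mul_apply_add_of_unique r r' (Finset.min'_mem _ _) (Finset.min'_mem _ _)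
    fun _ hk _ hl hkl => ((add_eq_add_iff_eq_and_eq (Finset.min'_le _ _ hk)
      (Finset.min'_le _ _ hl)).1 hkl.symm).imp Eq.symm Eq.symm

theorem coe_mul_apply_max'_add_max' [LinearOrder ι] [IsOrderedCancelAddMonoid ι]
    [∀ (i : ι) (x : 𝒜 i), Decidable (x ≠ 0)] {r r' : ⨁ i, 𝒜 i} (hr : r.support.Nonempty)
    (hr' : r'.support.Nonempty) :
    ((r * r') (r.support.max' hr + r'.support.max' hr') : R) =
      r (r.support.max' hr) * r' (r'.support.max' hr') :=
  coe_mul_apply_add_of_unique r r' (Finset.max'_mem _ _) (Finset.max'_mem _ _)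
    fun _ hk _ hl hkl => (add_eq_add_iff_eq_and_eq (Finset.le_max' _ _ hk)
      (Finset.le_max' _ _ hl)).1 hkl

theorem IsInternal.isHomogeneousElem_of_mul_eq_one [LinearOrder ι] [IsOrderedCancelAddMonoid ι]
    [Nontrivial R] (h : IsInternal 𝒜)
    (hdom : ∀ {i j : ι} {x y : R}, x ∈ 𝒜 i → y ∈ 𝒜 j → x ≠ 0 → y ≠ 0 → x * y ≠ 0)
    {a b : R} (hab : a * b = 1) : SetLike.IsHomogeneousElem 𝒜 a := by
  classical
  obtain ⟨r, rfl⟩ := h.2 a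
  obtain ⟨r', rfl⟩ := h.2 b
  have hrr' : r * r' = 1 := h.1 <| show coeRingHom 𝒜 (r * r') = coeRingHom 𝒜 1 by
    rw [map_mul, map_one]; exact hab
  have : Nontrivial (⨁ i, 𝒜 i) := nontrivial_of_ne 1 0 fun h0 =>
    one_ne_zero ((map_one (coeRingHom 𝒜)).symm.trans (by rw [h0, map_zero]))
  have hr : r.support.Nonempty := Finset.nonempty_iff_ne_empty.2 <|
    DFinsupp.support_eq_empty.not.2 (left_ne_zero_of_mul_eq_one hrr')
  have hr' : r'.support.Nonempty := Finset.nonempty_iff_ne_empty.2 <|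
    DFinsupp.support_eq_empty.not.2 (right_ne_zero_of_mul_eq_one hrr')
  have hdeg : ∀ {i j : ι}, i ∈ r.support → j ∈ r'.support →
      ((r * r') (i + j) : R) = r i * r' j → i + j = 0 := by
    intro i j hi hj hij
    by_contra hne
    rw [hrr', one_def, of_eq_of_ne _ _ _ hne] at hij
    exact hdom (r i).2 (r' j).2 (by simpa using hi) (by simpa using hj)
      (by simpa using hij.symm)
  have hmin := hdeg (Finset.min'_mem _ hr) (Finset.min'_mem _ hr')
    (coe_mul_apply_min'_add_min' hr hr')
  have hmax := hdeg (Finset.max'_mem _ hr) (Finset.max'_mem _ hr')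
    (coe_mul_apply_max'_add_max' hr hr')
  have hflat : r.support.min' hr = r.support.max' hr :=
    ((add_eq_add_iff_eq_and_eq (Finset.min'_le_max' _ _) (Finset.min'_le_max' _ _)).1
      (hmin.trans hmax.symm)).1
  set m := r.support.min' hr
  have hsupp : r.support = {m} := Finset.eq_singleton_iff_unique_mem.2
    ⟨Finset.min'_mem _ _, fun k hk =>
      le_antisymm (hflat ▸ Finset.le_max' _ _ hk) (Finset.min'_le _ _ hk)⟩
  have hr_of : r = of (fun i => 𝒜 i) m (r m) := by
    conv_lhs => rw [← sum_support_of r, hsupp, Finset.sum_singleton]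
  refine ⟨m, ?_⟩
  rw [hr_of, coeAddMonoidHom_of]
  exact (r m).2

end DirectSum

theorem Function.Involutive.apply_ne_zero {M : Type*} [AddGroup M] {τ : M → M}
    (hτ : Function.Involutive τ) (hadd : ∀ a b, τ (a + b) = τ a + τ b) {a : M} (ha : a ≠ 0) :
    τ a ≠ 0 :=
  fun h0 => ha (by rw [← hτ a, h0]; exact map_zero (AddMonoidHom.mk' τ hadd))

section LeadingTerm

variable {ι E : Type*} [AddCommGroup E] {𝒜 : ι → AddSubgroup E}

theorem AddMonoidHom.apply_mem_biSup (φ : E →+ E) (hφ : ∀ i, ∀ x ∈ 𝒜 i, φ x ∈ 𝒜 i)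
    {S : Set ι} {x : E} (hx : x ∈ ⨆ i ∈ S, 𝒜 i) : φ x ∈ ⨆ i ∈ S, 𝒜 i := by
  have hle : (⨆ i ∈ S, 𝒜 i) ≤ (⨆ i ∈ S, 𝒜 i).comap φ :=
    iSup₂_le fun i hi y hy => le_iSup₂ (f := fun i (_ : i ∈ S) => 𝒜 i) i hi (hφ i y hy)
  exact hle hx

variable [LinearOrder ι]

/-- In the notation of the paper, `IsLeadingTerm 𝒜 a x` says `x = λ(a)`. -/
def IsLeadingTerm (𝒜 : ι → AddSubgroup E) (a x : E) : Prop :=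
  ∃ δ : ι, x ∈ 𝒜 δ ∧ x ≠ 0 ∧ a - x ∈ ⨆ i ∈ Set.Ioi δ, 𝒜 i

theorem iSupIndep.eq_of_sub_mem_iSup_Ioi_of_le (h : iSupIndep 𝒜) {b x y : E} {δ δ' : ι}
    (hx : x ∈ 𝒜 δ) (hx0 : x ≠ 0) (hbx : b - x ∈ ⨆ i ∈ Set.Ioi δ, 𝒜 i)
    (hy : y ∈ 𝒜 δ') (hby : b - y ∈ ⨆ i ∈ Set.Ioi δ', 𝒜 i) (hle : δ ≤ δ') : x = y := by
  have hdisj : ∀ {z : E}, z ∈ 𝒜 δ → z ∈ ⨆ i ∈ Set.Ioi δ, 𝒜 i → z = 0 :=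
    AddSubgroup.disjoint_def.1 (h.disjoint_biSup (lt_irrefl δ : δ ∉ Set.Ioi δ))
  have hxy : x - y ∈ ⨆ i ∈ Set.Ioi δ, 𝒜 i := by
    simpa using sub_mem ((biSup_mono fun _ => (Set.Ioi_subset_Ioi hle ·) :
      (⨆ i ∈ Set.Ioi δ', 𝒜 i) ≤ ⨆ i ∈ Set.Ioi δ, 𝒜 i) hby) hbx
  obtain rfl | hlt := hle.eq_or_lt
  · exact sub_eq_zero.1 (hdisj (sub_mem hx hy) hxy)
  · have hy' : y ∈ ⨆ i ∈ Set.Ioi δ, 𝒜 i := le_iSup₂ (f := fun i _ => 𝒜 i) δ' hlt hy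
    exact absurd (hdisj hx (by simpa using add_mem hxy hy')) hx0

theorem IsLeadingTerm.unique (h : iSupIndep 𝒜) {a x y : E} (hx : IsLeadingTerm 𝒜 a x)
    (hy : IsLeadingTerm 𝒜 a y) : x = y := by
  obtain ⟨δ, hxδ, hx0, hax⟩ := hx
  obtain ⟨δ', hyδ', hy0, hay⟩ := hy
  rcases le_total δ δ' with hle | hle
  · exact h.eq_of_sub_mem_iSup_Ioi_of_le hxδ hx0 hax hyδ' hay hle
  · exact (h.eq_of_sub_mem_iSup_Ioi_of_le hyδ' hy0 hay hxδ hax hle).symm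

theorem IsLeadingTerm.map {a x : E} (hx : IsLeadingTerm 𝒜 a x) (φ : E →+ E)
    (hφ : ∀ i, ∀ x ∈ 𝒜 i, φ x ∈ 𝒜 i) (hφ0 : ∀ x, x ≠ 0 → φ x ≠ 0) :
    IsLeadingTerm 𝒜 (φ a) (φ x) := by
  obtain ⟨δ, hxδ, hx0, hax⟩ := hx
  exact ⟨δ, hφ δ x hxδ, hφ0 x hx0, by simpa only [map_sub] using φ.apply_mem_biSup hφ hax⟩

end LeadingTerm

/-- Lemma 2.3(ii) of Hazrat–Wadsworth: let `E` be a graded division ring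
(grade group totally ordered, torsion-free abelian), `Q = q(E)` its quotient
division ring of central fractions via `f : E → Q`, and `L` the leading-term
map `λ` extended to `Q*` (characterized by picking the lowest-degree
homogeneous component on `E` and multiplicativity). If `τE` is a graded
involution of `E`, extended to an involution `τQ` of `Q`, then
`τ(λ(q)) = λ(τ(q))` for all `q ∈ Q*`; consequently `λ(Σ_τ(Q)) ⊆ Σ_τ(E)` and
`Σ_τ(Q) ∩ E* ⊆ Σ_τ(E)`. -/
theorem stmt14 {Γ E Q : Type*} [AddCommGroup Γ] [LinearOrder Γ] [IsOrderedAddMonoid Γ] [DecidableEq Γ]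
    [Ring E] [Nontrivial E] [DivisionRing Q]
    (𝒜 : Γ → AddSubgroup E)
    (hinternal : DirectSum.IsInternal 𝒜)
    (hone : (1 : E) ∈ 𝒜 0)
    (hmul : ∀ {γ δ : Γ} {x y : E}, x ∈ 𝒜 γ → y ∈ 𝒜 δ → x * y ∈ 𝒜 (γ + δ))
    (hdiv : ∀ (γ : Γ) (x : E), x ∈ 𝒜 γ → x ≠ 0 → IsUnit x)
    -- `Q` is the quotient division ring of `E` by central localization:
    (f : E →+* Q) (hfinj : Function.Injective f)
    (hloc : ∀ q : Q, q ≠ 0 → ∃ a c : E, a ≠ 0 ∧ c ≠ 0 ∧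
      c ∈ Subring.center E ∧ q = f a * (f c)⁻¹)
    -- `τE` is a graded involution of `E`:
    (τE : E → E)
    (hEadd : ∀ a b : E, τE (a + b) = τE a + τE b)
    (hEmul : ∀ a b : E, τE (a * b) = τE b * τE a)
    (hE2 : ∀ a : E, τE (τE a) = a)
    (hEgr : ∀ (γ : Γ) (x : E), x ∈ 𝒜 γ → τE x ∈ 𝒜 γ)
    -- `τQ` is the extension of `τE` to an involution of `Q`:
    (τQ : Q → Q)
    (hQadd : ∀ p q : Q, τQ (p + q) = τQ p + τQ q)
    (hQmul : ∀ p q : Q, τQ (p * q) = τQ q * τQ p)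
    (hQ2 : ∀ q : Q, τQ (τQ q) = q)
    (hcompat : ∀ a : E, τQ (f a) = f (τE a))
    -- `L` is the leading-term map `λ : Q* → E*`:
    (L : Q → E)
    (hlead : ∀ a : E, a ≠ 0 → ∃ δ : Γ,
      L (f a) ∈ 𝒜 δ ∧ L (f a) ≠ 0 ∧ a - L (f a) ∈ ⨆ γ ∈ Set.Ioi δ, 𝒜 γ)
    (hLmul : ∀ p q : Q, p ≠ 0 → q ≠ 0 → L (p * q) = L p * L q)
    (hLid : ∀ (γ : Γ) (x : E), x ∈ 𝒜 γ → x ≠ 0 → L (f x) = x) :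
    (∀ q : Q, q ≠ 0 → τE (L q) = L (τQ q)) ∧
    (∀ q : Qˣ, q ∈ Subgroup.closure {u : Qˣ | τQ (u : Q) = (u : Q)} →
      ∃ v : Eˣ, (v : E) = L (q : Q) ∧
        v ∈ Subgroup.closure {w : Eˣ | τE (w : E) = (w : E)}) ∧
    (∀ (a : Eˣ) (q : Qˣ), (q : Q) = f (a : E) →
      q ∈ Subgroup.closure {u : Qˣ | τQ (u : Q) = (u : Q)} →
      a ∈ Subgroup.closure {w : Eˣ | τE (w : E) = (w : E)}) := by
  have : SetLike.GradedMonoid 𝒜 := { one_mem := hone, mul_mem := fun _ _ _ _ => hmul }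
  let τ : E →+ E := AddMonoidHom.mk' τE hEadd
  have hτE0 : ∀ a : E, a ≠ 0 → τE a ≠ 0 := fun _ => Function.Involutive.apply_ne_zero hE2 hEadd
  have hτQ0 : ∀ q : Q, q ≠ 0 → τQ q ≠ 0 := fun _ => Function.Involutive.apply_ne_zero hQ2 hQadd
  have hf0 : ∀ a : E, a ≠ 0 → f a ≠ 0 := fun a ha => (map_ne_zero_iff f hfinj).2 ha
  have hLf_unit : ∀ a : E, a ≠ 0 → IsUnit (L (f a)) := fun a ha => by
    obtain ⟨δ, hδ, h0, -⟩ := hlead a ha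
    exact hdiv δ _ hδ h0
  have hτL : ∀ a : E, a ≠ 0 → τE (L (f a)) = L (f (τE a)) := fun a ha =>
    IsLeadingTerm.unique hinternal.addSubgroup_iSupIndep
      (IsLeadingTerm.map (hlead a ha) τ hEgr hτE0)
      (hlead (τE a) (hτE0 a ha))
  have hfrac : ∀ q : Q, q ≠ 0 → ∃ a c : E, a ≠ 0 ∧ c ≠ 0 ∧ q * f c = f a := fun q hq => by
    obtain ⟨a, c, ha, hc, -, rfl⟩ := hloc q hq
    exact ⟨a, c, ha, hc, inv_mul_cancel_right₀ (hf0 c hc) _⟩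
  have hL_unit : ∀ q : Q, q ≠ 0 → IsUnit (L q) := fun q hq => by
    obtain ⟨a, c, ha, hc, hqc⟩ := hfrac q hq
    obtain ⟨u, hu⟩ := hLf_unit c hc
    rw [← Units.isUnit_mul_units _ u, hu, ← hLmul _ _ hq (hf0 c hc), hqc]
    exact hLf_unit a ha
  have part1 : ∀ q : Q, q ≠ 0 → τE (L q) = L (τQ q) := fun q hq => by
    obtain ⟨a, c, ha, hc, hqc⟩ := hfrac q hq
    have hτqc : f (τE c) * τQ q = f (τE a) := by rw [← hcompat, ← hcompat, ← hQmul, hqc]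
    apply (hLf_unit _ (hτE0 c hc)).mul_left_cancel
    calc L (f (τE c)) * τE (L q) = τE (L q * L (f c)) := by rw [hEmul, hτL c hc]
      _ = τE (L (f a)) := by rw [← hLmul _ _ hq (hf0 c hc), hqc]
      _ = L (f (τE c) * τQ q) := by rw [hτL a ha, hτqc]
      _ = L (f (τE c)) * L (τQ q) := hLmul _ _ (hf0 _ (hτE0 c hc)) (hτQ0 q hq)
  let Λ : Qˣ →* Eˣ := MonoidHom.mk' (fun q => (hL_unit q q.ne_zero).unit)
    fun p q => Units.ext (hLmul _ _ p.ne_zero q.ne_zero)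
  have part2 : (Subgroup.closure {u : Qˣ | τQ (u : Q) = (u : Q)}).map Λ ≤
      Subgroup.closure {w : Eˣ | τE (w : E) = (w : E)} := by
    rw [MonoidHom.map_closure]
    refine Subgroup.closure_mono ?_
    rintro _ ⟨u, hu, rfl⟩
    exact (part1 u u.ne_zero).trans (congrArg L hu)
  refine ⟨part1, fun q hq => ⟨Λ q, rfl, part2 ⟨q, hq, rfl⟩⟩, fun a q hqa hq => ?_⟩
  obtain ⟨γ, hγ⟩ := hinternal.isHomogeneousElem_of_mul_eq_one
    (fun hx hy hx0 hy0 => ((hdiv _ _ hx hx0).mul (hdiv _ _ hy hy0)).ne_zero) a.mul_inv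
  have hΛa : Λ q = a := Units.ext (by simp [Λ, hqa, hLid γ _ hγ a.ne_zero])
  exact hΛa ▸ part2 ⟨q, hq, rfl⟩
end

section
/- Let E be a graded division algebra with unitary graded involution τ and R = T^τ, with T unramified over R. Suppose for each γ ∈ Γ_E a nonzero symmetric element s_γ ∈ E_γ ∩ S_τ is chosen. Then Σ'_τ(E) = ⋃_{γ ∈ Γ_E} s_γ·(Σ'_τ(E) ∩ E₀*), and the inclusion E₀* ↪ E* induces a group isomorphism (Σ'_τ(E) ∩ E₀*)/(Σ_τ(E) ∩ E₀*) ≅ Σ'_τ(E)/Σ_τ(E) = SK₁(E, τ). -/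
open DirectSum

/-- In a graded division ring graded by a torsion-free abelian group, every unit is
homogeneous. -/
lemma aux_units_homog {Γ E : Type*} [AddCommGroup Γ] [DecidableEq Γ] [Ring E] [Nontrivial E]
    (𝒜 : Γ → AddSubgroup E) [GradedRing 𝒜]
    (hdiv : ∀ (γ : Γ) (x : E), x ∈ 𝒜 γ → x ≠ 0 → IsUnit x)
    (hTF : ∀ k : ℕ, k ≠ 0 → ∀ γ : Γ, k • γ = 0 → γ = 0)
    (a : Eˣ) : ∃ γ : Γ, (a : E) ∈ 𝒜 γ := by
  classical
  set x : E := (a : E) with hxdef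
  set y : E := ((a⁻¹ : Eˣ) : E) with hydef
  set dx := DirectSum.decompose 𝒜 x with hdx
  set dy := DirectSum.decompose 𝒜 y with hdy
  set S : Finset Γ := dx.support ∪ dy.support with hS
  set G : AddSubgroup Γ := AddSubgroup.closure ↑S with hG
  haveI : Module.Finite ℤ G :=
    Module.Finite.iff_addGroup_fg.mpr ((AddGroup.fg_iff_addSubgroup_fg G).mpr ⟨S, rfl⟩)
  haveI : NoZeroSMulDivisors ℤ G := by
    constructor
    intro n g h
    by_contra hc
    push_neg at hc
    obtain ⟨hn, hg⟩ := hc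
    have h' : n • (g : Γ) = 0 := by
      have := congrArg (G.subtype) h
      simpa using this
    have hgne : (g : Γ) ≠ 0 := fun hz => hg (Subtype.ext hz)
    apply hgne
    refine hTF n.natAbs (Int.natAbs_ne_zero.mpr hn) _ ?_
    have h2 : ((n.natAbs : ℤ)) • (g : Γ) = 0 := by
      rcases Int.natAbs_eq n with he | he
      · rw [← he]; exact h'
      · have : ((n.natAbs : ℤ)) = -n := by omega
        rw [this, neg_smul, h', neg_zero]
    rwa [natCast_zsmul] at h2
  obtain ⟨n, b⟩ := Module.basisOfFiniteTypeTorsionFree' (R := ℤ) (M := G)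
  haveI : WellFoundedLT (Fin n) := inferInstance
  set w : Γ → Lex (Fin n → ℤ) :=
    fun γ => if h : γ ∈ G then toLex ⇑(b.repr ⟨γ, h⟩) else 0 with hw
  have wadd : ∀ {γ δ : Γ}, γ ∈ G → δ ∈ G → w (γ + δ) = w γ + w δ := by
    intro γ δ hγ hδ
    simp only [hw, dif_pos hγ, dif_pos hδ, dif_pos (add_mem hγ hδ)]
    have h1 : (⟨γ + δ, add_mem hγ hδ⟩ : G) = ⟨γ, hγ⟩ + ⟨δ, hδ⟩ := rfl
    rw [h1, map_add]
    rfl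
  have winj : ∀ {γ δ : Γ}, γ ∈ G → δ ∈ G → w γ = w δ → γ = δ := by
    intro γ δ hγ hδ h
    simp only [hw, dif_pos hγ, dif_pos hδ] at h
    have h2 : b.repr ⟨γ, hγ⟩ = b.repr ⟨δ, hδ⟩ := DFunLike.coe_injective (toLex.injective h)
    have h3 : (⟨γ, hγ⟩ : G) = ⟨δ, hδ⟩ := b.repr.injective h2
    exact congrArg Subtype.val h3
  have hx0 : x ≠ 0 := Units.ne_zero a
  have hy0 : y ≠ 0 := Units.ne_zero a⁻¹
  have hdxne : dx.support.Nonempty := by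
    rw [Finset.nonempty_iff_ne_empty, Ne, DFinsupp.support_eq_empty]
    intro h0
    exact hx0 ((DirectSum.decompose 𝒜).injective (by rw [← hdx, h0, DirectSum.decompose_zero]))
  have hdyne : dy.support.Nonempty := by
    rw [Finset.nonempty_iff_ne_empty, Ne, DFinsupp.support_eq_empty]
    intro h0
    exact hy0 ((DirectSum.decompose 𝒜).injective (by rw [← hdy, h0, DirectSum.decompose_zero]))
  have memGx : ∀ γ ∈ dx.support, γ ∈ G :=
    fun γ h => AddSubgroup.subset_closure (Finset.mem_coe.mpr (Finset.mem_union_left _ h))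
  have memGy : ∀ γ ∈ dy.support, γ ∈ G :=
    fun γ h => AddSubgroup.subset_closure (Finset.mem_coe.mpr (Finset.mem_union_right _ h))
  -- Key claim: if (μ, ν) is the unique pair in the supports with its degree-sum,
  -- then that degree-sum is zero.
  have key : ∀ μ ∈ dx.support, ∀ ν ∈ dy.support,
      (∀ γ ∈ dx.support, ∀ δ ∈ dy.support, γ + δ = μ + ν → γ = μ) → μ + ν = 0 := by
    intro μ hμ ν hν huniq
    by_contra hne0
    have hxy : x * y = 1 := Units.mul_inv a
    have h1 : GradedRing.proj 𝒜 (μ + ν) (x * y) = 0 := by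
      rw [hxy, GradedRing.proj_apply,
        DirectSum.decompose_of_mem_ne 𝒜 SetLike.GradedOne.one_mem (fun h => hne0 h.symm)]
    have h2 : GradedRing.proj 𝒜 (μ + ν) (x * y) = ((dx μ : E)) * ((dy ν : E)) := by
      have hterm0 : ∀ γ ∈ dx.support, ∀ δ ∈ dy.support, γ + δ ≠ μ + ν →
          GradedRing.proj 𝒜 (μ + ν) (((dx γ : E)) * ((dy δ : E))) = 0 := by
        intro γ _ δ _ hne
        have hm : ((dx γ : E)) * ((dy δ : E)) ∈ 𝒜 (γ + δ) :=
          SetLike.GradedMul.mul_mem (dx γ).2 (dy δ).2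
        rw [GradedRing.proj_apply, DirectSum.decompose_of_mem_ne 𝒜 hm hne]
      calc GradedRing.proj 𝒜 (μ + ν) (x * y)
          = ∑ γ ∈ dx.support, ∑ δ ∈ dy.support,
              GradedRing.proj 𝒜 (μ + ν) (((dx γ : E)) * ((dy δ : E))) := by
            conv_lhs => rw [← DirectSum.sum_support_decompose 𝒜 x,
              ← DirectSum.sum_support_decompose 𝒜 y]
            rw [Finset.sum_mul_sum]
            rw [map_sum]
            exact Finset.sum_congr rfl fun γ _ => map_sum _ _ _
        _ = ∑ δ ∈ dy.support, GradedRing.proj 𝒜 (μ + ν) (((dx μ : E)) * ((dy δ : E))) := by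
            refine Finset.sum_eq_single_of_mem μ hμ ?_
            intro γ hγ hγμ
            refine Finset.sum_eq_zero fun δ hδ => hterm0 γ hγ δ hδ ?_
            intro heq
            exact hγμ (huniq γ hγ δ hδ heq)
        _ = GradedRing.proj 𝒜 (μ + ν) (((dx μ : E)) * ((dy ν : E))) := by
            refine Finset.sum_eq_single_of_mem ν hν ?_
            intro δ hδ hδν
            refine hterm0 μ hμ δ hδ ?_
            intro heq
            exact hδν (add_left_cancel heq)
        _ = ((dx μ : E)) * ((dy ν : E)) := by
            rw [GradedRing.proj_apply, DirectSum.decompose_of_mem_same 𝒜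
              (SetLike.GradedMul.mul_mem (dx μ).2 (dy ν).2)]
    have hu1 : IsUnit ((dx μ : E)) := by
      refine hdiv μ _ (dx μ).2 ?_
      have := DFinsupp.mem_support_iff.mp hμ
      exact fun hz => this (Subtype.ext hz)
    have hu2 : IsUnit ((dy ν : E)) := by
      refine hdiv ν _ (dy ν).2 ?_
      have := DFinsupp.mem_support_iff.mp hν
      exact fun hz => this (Subtype.ext hz)
    exact (hu1.mul hu2).ne_zero (by rw [← h2, h1])
  obtain ⟨μ, hμ, hμmax⟩ := dx.support.exists_max_image w hdxne
  obtain ⟨ν, hν, hνmax⟩ := dy.support.exists_max_image w hdyne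
  obtain ⟨μ', hμ', hμ'min⟩ := dx.support.exists_min_image w hdxne
  obtain ⟨ν', hν', hν'min⟩ := dy.support.exists_min_image w hdyne
  have cancel : ∀ {γ δ κ l' : Γ}, γ ∈ G → δ ∈ G → κ ∈ G → l' ∈ G →
      γ + δ = κ + l' → w γ ≤ w κ → w δ ≤ w l' → γ = κ := by
    intro γ δ κ l' hγ hδ hκ hl heq hle1 hle2
    have hsum : w γ + w δ = w κ + w l' := by
      rw [← wadd hγ hδ, ← wadd hκ hl, heq]
    have h1 : w γ = w κ := by
      by_contra hne
      have hlt : w γ < w κ := lt_of_le_of_ne hle1 hne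
      exact (ne_of_lt (add_lt_add_of_lt_of_le hlt hle2)) hsum
    exact winj hγ hκ h1
  have hmax0 : μ + ν = 0 :=
    key μ hμ ν hν fun γ hγ δ hδ heq =>
      cancel (memGx γ hγ) (memGy δ hδ) (memGx μ hμ) (memGy ν hν) heq
        (hμmax γ hγ) (hνmax δ hδ)
  have hmin0 : μ' + ν' = 0 :=
    key μ' hμ' ν' hν' fun γ hγ δ hδ heq =>
      (cancel (memGx μ' hμ') (memGy ν' hν') (memGx γ hγ) (memGy δ hδ) heq.symm
        (hμ'min γ hγ) (hν'min δ hδ)).symm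
  have hμμ' : μ' = μ :=
    cancel (memGx μ' hμ') (memGy ν' hν') (memGx μ hμ) (memGy ν hν)
      (hmin0.trans hmax0.symm) (hμ'min μ hμ) (hν'min ν hν)
  have hsingle : ∀ γ ∈ dx.support, γ = μ := by
    intro γ hγ
    refine winj (memGx γ hγ) (memGx μ hμ) (le_antisymm (hμmax γ hγ) ?_)
    calc w μ = w μ' := by rw [hμμ']
      _ ≤ w γ := hμ'min γ hγ
  refine ⟨μ, ?_⟩
  have hxe : (∑ γ ∈ dx.support, ((dx γ : E))) = x := DirectSum.sum_support_decompose 𝒜 x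
  rw [← hxe]
  refine AddSubgroup.sum_mem _ fun γ hγ => ?_
  rw [hsingle γ hγ]
  exact (dx μ).2


/-- Lemma 4.6(iii) of Hazrat–Wadsworth (with `Σ'ᵤ = {a : Nrd(a) ∈ R*}`, i.e.
the reduced norm is central and `τ`-fixed): let `E` be a graded division
algebra with unitary graded involution `τ`, `T` unramified over `R = T^τ`, and
suppose for each `γ ∈ Γ_E` a nonzero symmetric `s γ ∈ E_γ ∩ S_τ` is chosen.
Then `Σ'_τ(E) = ⋃_γ s_γ·(Σ'_τ(E) ∩ E₀*)` and the inclusion `E₀* ↪ E*` induces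
an isomorphism `(Σ'_τ ∩ E₀*)/(Σ_τ ∩ E₀*) ≅ Σ'_τ/Σ_τ`; the surjectivity of the
induced map is the decomposition `Σ'_τ = (Σ'_τ ∩ E₀*)·Σ_τ` (injectivity and
multiplicativity being automatic). -/
theorem stmt18 {Γ E : Type*} [AddCommGroup Γ] [DecidableEq Γ]
    [Ring E] [Nontrivial E]
    (𝒜 : Γ → AddSubgroup E)
    (hinternal : DirectSum.IsInternal 𝒜)
    (hone : (1 : E) ∈ 𝒜 0)
    (hmul : ∀ {γ δ : Γ} {x y : E}, x ∈ 𝒜 γ → y ∈ 𝒜 δ → x * y ∈ 𝒜 (γ + δ))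
    (hdiv : ∀ (γ : Γ) (x : E), x ∈ 𝒜 γ → x ≠ 0 → IsUnit x)
    (hTF : ∀ k : ℕ, k ≠ 0 → ∀ γ : Γ, k • γ = 0 → γ = 0)
    -- `τ` is a graded involution of `E`:
    (τ : E → E)
    (hτadd : ∀ a b : E, τ (a + b) = τ a + τ b)
    (hτmul : ∀ a b : E, τ (a * b) = τ b * τ a)
    (hτ2 : ∀ a : E, τ (τ a) = a)
    (hτgr : ∀ (γ : Γ) (x : E), x ∈ 𝒜 γ → τ x ∈ 𝒜 γ)
    -- `τ` is unitary with `T = Z(E)` unramified over `R = T^τ`: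
    (hunr : ∃ c : E, c ∈ 𝒜 (0 : Γ) ∧ c ∈ Subring.center E ∧ τ c ≠ c)
    -- the reduced norm of `E`, with central values, satisfying
    -- `Nrd(τ(a)) = τ(Nrd(a))`:
    (Nrd : Eˣ →* Eˣ)
    (hNrdC : ∀ a : Eˣ, ((Nrd a : Eˣ) : E) ∈ Subring.center E)
    (hNrdτ : ∀ a b : Eˣ, (b : E) = τ (a : E) →
      ((Nrd b : Eˣ) : E) = τ ((Nrd a : Eˣ) : E))
    -- chosen nonzero symmetric elements `s γ ∈ E_γ` for each `γ ∈ Γ_E`: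
    (s : Γ → Eˣ)
    (hs : ∀ γ : Γ, (∃ x ∈ 𝒜 γ, x ≠ 0) →
      ((s γ : E) ∈ 𝒜 γ ∧ τ (s γ : E) = (s γ : E))) :
    (∀ a : Eˣ, τ ((Nrd a : Eˣ) : E) = ((Nrd a : Eˣ) : E) ↔
      ∃ γ : Γ, (∃ x ∈ 𝒜 γ, x ≠ 0) ∧ ∃ b : Eˣ, (b : E) ∈ 𝒜 0 ∧
        τ ((Nrd b : Eˣ) : E) = ((Nrd b : Eˣ) : E) ∧ a = s γ * b) ∧
    (∀ a : Eˣ, τ ((Nrd a : Eˣ) : E) = ((Nrd a : Eˣ) : E) →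
      ∃ b c : Eˣ, (b : E) ∈ 𝒜 0 ∧
        τ ((Nrd b : Eˣ) : E) = ((Nrd b : Eˣ) : E) ∧
        c ∈ Subgroup.closure
          {u : Eˣ | (∃ γ : Γ, (u : E) ∈ 𝒜 γ) ∧ τ (u : E) = (u : E)} ∧
        a = b * c) := by

  classical
  letI : SetLike.GradedMonoid 𝒜 :=
    { one_mem := hone, mul_mem := fun _ _ _ _ hx hy => hmul hx hy }
  letI : DirectSum.Decomposition 𝒜 := hinternal.chooseDecomposition
  letI : GradedRing 𝒜 :=
    { ‹SetLike.GradedMonoid 𝒜›, ‹DirectSum.Decomposition 𝒜› with }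
  -- basic facts about τ
  have hτ1 : τ (1 : E) = 1 := by
    refine Eq.symm ?_
    calc (1 : E) = τ (τ 1) := (hτ2 1).symm
      _ = τ (τ 1 * 1) := by rw [mul_one]
      _ = τ 1 * τ (τ 1) := hτmul _ _
      _ = τ 1 := by rw [hτ2, mul_one]
  have hτinv : ∀ u : Eˣ, τ (u : E) = (u : E) →
      τ ((u⁻¹ : Eˣ) : E) = ((u⁻¹ : Eˣ) : E) := by
    intro u hu
    have h1 : (u : E) * τ ((u⁻¹ : Eˣ) : E) = 1 := by
      calc (u : E) * τ ((u⁻¹ : Eˣ) : E) = τ (u : E) * τ ((u⁻¹ : Eˣ) : E) := by rw [hu]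
        _ = τ (((u⁻¹ : Eˣ) : E) * (u : E)) := (hτmul _ _).symm
        _ = τ 1 := by rw [Units.inv_mul]
        _ = 1 := hτ1
    calc τ ((u⁻¹ : Eˣ) : E)
        = (((u⁻¹ : Eˣ) : E) * (u : E)) * τ ((u⁻¹ : Eˣ) : E) := by
          rw [Units.inv_mul, one_mul]
      _ = ((u⁻¹ : Eˣ) : E) * ((u : E) * τ ((u⁻¹ : Eˣ) : E)) := by rw [mul_assoc]
      _ = ((u⁻¹ : Eˣ) : E) := by rw [h1, mul_one]
  -- distinct homogeneous components intersect trivially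
  have hdisj : ∀ {γ δ : Γ} {z : E}, γ ≠ δ → z ∈ 𝒜 γ → z ∈ 𝒜 δ → z = 0 := by
    intro γ δ z hne h1 h2
    have e1 := DirectSum.decompose_of_mem_same 𝒜 h1
    have e2 := DirectSum.decompose_of_mem_ne 𝒜 h2 (Ne.symm hne)
    rw [← e1, e2]
  -- every unit is homogeneous
  have hhomog : ∀ a : Eˣ, ∃ γ : Γ, (a : E) ∈ 𝒜 γ := fun a =>
    aux_units_homog 𝒜 hdiv hTF a
  -- the inverse of a homogeneous unit is homogeneous of opposite degree
  have hinvdeg : ∀ (u : Eˣ) (γ : Γ), (u : E) ∈ 𝒜 γ → ((u⁻¹ : Eˣ) : E) ∈ 𝒜 (-γ) := by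
    intro u γ hu
    obtain ⟨δ, hδ⟩ := hhomog u⁻¹
    have h1 : (1 : E) ∈ 𝒜 (γ + δ) := by
      have := hmul hu hδ
      rwa [Units.mul_inv] at this
    have h0 : γ + δ = 0 := by
      by_contra hne
      exact one_ne_zero (hdisj hne h1 hone)
    rwa [← neg_eq_of_add_eq_zero_right h0] at hδ
  -- Nrd values are central, hence commute with everything
  have hcomm : ∀ (u : Eˣ) (z : E),
      z * ((Nrd u : Eˣ) : E) = ((Nrd u : Eˣ) : E) * z := fun u z =>
    Subring.mem_center_iff.mp (hNrdC u) z
  -- Nrd of the chosen symmetric elements is symmetric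
  have hNrdS : ∀ γ : Γ, (∃ x ∈ 𝒜 γ, x ≠ 0) →
      τ ((Nrd (s γ) : Eˣ) : E) = ((Nrd (s γ) : Eˣ) : E) := fun γ h =>
    (hNrdτ (s γ) (s γ) (hs γ h).2.symm).symm
  -- forward direction of the first statement
  have fwd : ∀ a : Eˣ, τ ((Nrd a : Eˣ) : E) = ((Nrd a : Eˣ) : E) →
      ∃ γ : Γ, (∃ x ∈ 𝒜 γ, x ≠ 0) ∧ ∃ b : Eˣ, (b : E) ∈ 𝒜 0 ∧
        τ ((Nrd b : Eˣ) : E) = ((Nrd b : Eˣ) : E) ∧ a = s γ * b := by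
    intro a ha
    obtain ⟨γ, hγ⟩ := hhomog a
    have hne : ∃ x ∈ 𝒜 γ, x ≠ 0 := ⟨(a : E), hγ, Units.ne_zero a⟩
    obtain ⟨hsγ, hsτ⟩ := hs γ hne
    have hτu : τ ((Nrd (s γ) : Eˣ) : E) = ((Nrd (s γ) : Eˣ) : E) := hNrdS γ hne
    refine ⟨γ, hne, (s γ)⁻¹ * a, ?_, ?_, ?_⟩
    · have h := hmul (hinvdeg (s γ) γ hsγ) hγ
      rw [neg_add_cancel] at h
      rwa [Units.val_mul]
    · have hb : Nrd ((s γ)⁻¹ * a) = (Nrd (s γ))⁻¹ * Nrd a := by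
        rw [map_mul, map_inv]
      rw [hb, Units.val_mul]
      calc τ (((Nrd (s γ))⁻¹ : Eˣ) * ((Nrd a : Eˣ) : E))
          = τ ((Nrd a : Eˣ) : E) * τ (((Nrd (s γ))⁻¹ : Eˣ) : E) := hτmul _ _
        _ = ((Nrd a : Eˣ) : E) * (((Nrd (s γ))⁻¹ : Eˣ) : E) := by
            rw [ha, hτinv _ hτu]
        _ = (((Nrd (s γ))⁻¹ : Eˣ) : E) * ((Nrd a : Eˣ) : E) := by
            exact (hcomm a (((Nrd (s γ))⁻¹ : Eˣ) : E)).symm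
    · exact (mul_inv_cancel_left (s γ) a).symm
  refine ⟨fun a => ⟨fwd a, ?_⟩, ?_⟩
  · rintro ⟨γ, hne, b, hb0, hbτ, rfl⟩
    obtain ⟨hsγ, hsτ⟩ := hs γ hne
    rw [map_mul, Units.val_mul]
    calc τ (((Nrd (s γ) : Eˣ) : E) * ((Nrd b : Eˣ) : E))
        = τ ((Nrd b : Eˣ) : E) * τ ((Nrd (s γ) : Eˣ) : E) := hτmul _ _
      _ = ((Nrd b : Eˣ) : E) * ((Nrd (s γ) : Eˣ) : E) := by rw [hbτ, hNrdS γ hne]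
      _ = ((Nrd (s γ) : Eˣ) : E) * ((Nrd b : Eˣ) : E) := hcomm (s γ) _
  · intro a ha
    obtain ⟨γ, hne, b', hb'0, hb'τ, hab⟩ := fwd a ha
    obtain ⟨hsγ, hsτ⟩ := hs γ hne
    refine ⟨s γ * b' * (s γ)⁻¹, s γ, ?_, ?_, ?_, ?_⟩
    · have h := hmul (hmul hsγ hb'0) (hinvdeg (s γ) γ hsγ)
      have he : γ + 0 + -γ = 0 := by abel
      rw [he] at h
      simpa only [Units.val_mul] using h
    · have hN : Nrd (s γ * b' * (s γ)⁻¹) = Nrd b' := by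
        rw [map_mul, map_mul, map_inv]
        have hcom : Nrd (s γ) * Nrd b' = Nrd b' * Nrd (s γ) := by
          apply Units.ext
          rw [Units.val_mul, Units.val_mul]
          exact (hcomm (s γ) ((Nrd b' : Eˣ) : E)).symm
        rw [hcom, mul_inv_cancel_right]
      rw [hN]
      exact hb'τ
    · exact Subgroup.subset_closure ⟨⟨γ, hsγ⟩, hsτ⟩
    · rw [hab]
      exact (inv_mul_cancel_right (s γ * b') (s γ)).symm
end

section
/- Let E be a graded division algebra over its center T such that the canonical epimorphism Θ_E : Γ_E → Gal(Z(E₀)/T₀) has the property that Γ_E/Γ_T is cyclic, and ker(Θ_E)/Γ_T carries a nondegenerate symplectic pairing into a group. Then ker(Θ_E) = Γ_T; consequently ∂ := ind(E)/(ind(E₀)·[Z(E₀):T₀]) satisfies ∂² = |ker(Θ_E)/Γ_T| = 1, so ∂ = 1 and E is inertially split. -/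
/-- Abstract form of the argument before Prop. 4.10 of Hazrat–Wadsworth (using
Lemma 2.2): let `Γ_T ≤ K ≤ Γ_E` (here `K = ker Θ_E`) with `Γ_E/Γ_T` cyclic,
and suppose the finite quotient `K/Γ_T` carries a nondegenerate alternating
(symplectic) bilinear pairing into a commutative group `M`. Then `K = Γ_T`;
consequently any `∂ ∈ ℕ` with `∂² = |K/Γ_T|` satisfies `∂ = 1` (so `E` is
inertially split). -/
theorem stmt19 {A M : Type*} [AddCommGroup A] [CommGroup M]
    (T K : AddSubgroup A) (hTK : T ≤ K)
    (hcyc : IsAddCyclic (A ⧸ T))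
    [Finite (↥K ⧸ T.addSubgroupOf K)]
    (β : (↥K ⧸ T.addSubgroupOf K) → (↥K ⧸ T.addSubgroupOf K) → M)
    (hβl : ∀ x y z, β (x + y) z = β x z * β y z)
    (hβr : ∀ x y z, β x (y + z) = β x y * β x z)
    (halt : ∀ x, β x x = 1)
    (hnd : ∀ x, (∀ y, β x y = 1) → x = 0) :
    K = T ∧ ∀ d : ℕ, d * d = Nat.card (↥K ⧸ T.addSubgroupOf K) → d = 1 := by
  -- the natural injective map `K ⧸ (T ∩ K) → A ⧸ T`
  let f : (↥K ⧸ T.addSubgroupOf K) →+ A ⧸ T :=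
    QuotientAddGroup.map (T.addSubgroupOf K) T K.subtype (fun x hx => hx)
  have hf : Function.Injective f := by
    intro x y hxy
    induction x using QuotientAddGroup.induction_on with
    | H a =>
    induction y using QuotientAddGroup.induction_on with
    | H b =>
    have h1 : ((a : A) : A ⧸ T) = ((b : A) : A ⧸ T) := hxy
    rw [QuotientAddGroup.eq] at h1
    exact QuotientAddGroup.eq.mpr h1
  -- the quotient is cyclic, being isomorphic to a subgroup of the cyclic `A ⧸ T`
  haveI : IsAddCyclic (↥K ⧸ T.addSubgroupOf K) := by
    have e : (↥K ⧸ T.addSubgroupOf K) ≃+ f.range := AddMonoidHom.ofInjective hf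
    exact isAddCyclic_of_surjective e.symm.toAddMonoidHom e.symm.surjective
  obtain ⟨g, hg⟩ := IsAddCyclic.exists_generator (α := ↥K ⧸ T.addSubgroupOf K)
  -- bilinearity in `ℤ`-multiples
  have hL : ∀ (n : ℤ) x z, β (n • x) z = β x z ^ n := by
    intro n x z
    let φ : (↥K ⧸ T.addSubgroupOf K) →+ Additive M :=
      AddMonoidHom.mk' (fun y => Additive.ofMul (β y z)) (fun a b => by
        exact congrArg Additive.ofMul (hβl a b z))
    have h2 := map_zsmul φ n x
    simpa [φ] using congrArg Additive.toMul h2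
  have hR : ∀ (n : ℤ) x z, β z (n • x) = β z x ^ n := by
    intro n x z
    let φ : (↥K ⧸ T.addSubgroupOf K) →+ Additive M :=
      AddMonoidHom.mk' (fun y => Additive.ofMul (β z y)) (fun a b => by
        exact congrArg Additive.ofMul (hβr z a b))
    have h2 := map_zsmul φ n x
    simpa [φ] using congrArg Additive.toMul h2
  -- the pairing is identically 1 on a cyclic group
  have htriv : ∀ x y, β x y = 1 := by
    intro x y
    obtain ⟨m, hm⟩ := hg x
    obtain ⟨n, hn⟩ := hg y
    rw [← hm, ← hn]
    show β (m • g) (n • g) = 1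
    rw [hL, hR, halt, one_zpow, one_zpow]
  -- hence the quotient is trivial
  have hzero : ∀ x : (↥K ⧸ T.addSubgroupOf K), x = 0 := fun x => hnd x (htriv x)
  have hKT : K = T := by
    refine le_antisymm (fun a ha => ?_) hTK
    have h3 : ((⟨a, ha⟩ : K) : ↥K ⧸ T.addSubgroupOf K) = 0 := hzero _
    simpa [QuotientAddGroup.eq_zero_iff, AddSubgroup.mem_addSubgroupOf] using h3
  refine ⟨hKT, fun d hd => ?_⟩
  have hcard : Nat.card (↥K ⧸ T.addSubgroupOf K) = 1 := by
    haveI : Subsingleton (↥K ⧸ T.addSubgroupOf K) :=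
      ⟨fun a b => (hzero a).trans (hzero b).symm⟩
    exact Nat.card_of_subsingleton 0
  rw [hcard] at hd
  nlinarith
end
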